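/- For any simple digraph G with maximum degree Δ(G) (the maximum over all vertices of both in-degrees and out-degrees), the energy satisfies E(G) ≤ 2√(Δ(G)) · R(G). -/

import Mathlib

open Matrix Finset

noncomputable section

/-- For a real matrix, `A * Aᵀ` is positive semidefinite. -/
theorem mulTranspose_posSemidef {m k : Type*} [Fintype m] [Fintype k] (A : Matrix m k ℝ) :
    (A * Aᵀ).PosSemidef := by
  have h := Matrix.posSemidef_self_mul_conjTranspose A
  rwa [Matrix.conjTranspose_eq_transpose_of_trivial] at h

/-- For a real matrix, `Aᵀ * A` is positive semidefinite. -/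
theorem transposeMul_posSemidef {m k : Type*} [Fintype m] [Fintype k] (A : Matrix m k ℝ) :
    (Aᵀ * A).PosSemidef := by
  simpa using mulTranspose_posSemidef Aᵀ

/-- The psd square root, as `Matrix.PosSemidef.sqrt` was defined in the older Mathlib. -/
def Matrix.PosSemidef.sqrt {n : Type*} [Fintype n] [DecidableEq n] {A : Matrix n n ℝ}
    (hA : A.PosSemidef) : Matrix n n ℝ :=
  hA.1.eigenvectorUnitary.1 * diagonal ((↑) ∘ (√·) ∘ hA.1.eigenvalues) *
    (star hA.1.eigenvectorUnitary : Matrix n n ℝ)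

/-- `|A|⁺ = (A Aᵀ)^{1/2}` (psd square root). -/
def absPlus {V : Type*} [Fintype V] [DecidableEq V] (A : Matrix V V ℝ) : Matrix V V ℝ :=
  (mulTranspose_posSemidef A).sqrt

/-- `|A|⁻ = (Aᵀ A)^{1/2}` (psd square root). -/
def absMinus {V : Type*} [Fintype V] [DecidableEq V] (A : Matrix V V ℝ) : Matrix V V ℝ :=
  (transposeMul_posSemidef A).sqrt

/-- The (Nikiforov) energy: `Tr((A Aᵀ)^{1/2})`, the sum of the singular values of `A`. -/
def energy {V : Type*} [Fintype V] [DecidableEq V] (A : Matrix V V ℝ) : ℝ := (absPlus A).trace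

/-- 0-1 adjacency matrix of the digraph with edge relation `E`. -/
def adjMat {V : Type*} [Fintype V] [DecidableEq V] (E : V → V → Prop) [DecidableRel E] :
    Matrix V V ℝ := Matrix.of fun i j => if E i j then 1 else 0

/-- Out-degree `d⁺(v)`. -/
def outDeg {V : Type*} [Fintype V] (E : V → V → Prop) [DecidableRel E] (v : V) : ℕ :=
  (univ.filter (fun w => E v w)).card

/-- In-degree `d⁻(w)`. -/
def inDeg {V : Type*} [Fintype V] (E : V → V → Prop) [DecidableRel E] (w : V) : ℕ :=
  (univ.filter (fun v => E v w)).card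

/-- Directed Randic index `R(G) = (1/2) Σ_{(v,w)∈E} 1/√(d⁺(v) d⁻(w))`. -/
def randic {V : Type*} [Fintype V] (E : V → V → Prop) [DecidableRel E] : ℝ :=
  (1/2) * ∑ v, ∑ w, if E v w then 1 / Real.sqrt (outDeg E v * inDeg E w) else 0

/-- Number of arcs of the digraph. -/
def numArcs {V : Type*} [Fintype V] (E : V → V → Prop) [DecidableRel E] : ℕ :=
  (univ.filter (fun p : V × V => E p.1 p.2)).card

/-- Maximum over vertices of in- and out-degrees, `Δ(G)`. -/
def maxDeg {V : Type*} [Fintype V] (E : V → V → Prop) [DecidableRel E] : ℕ :=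
  univ.sup (fun v => max (outDeg E v) (inDeg E v))

lemma Matrix.PosSemidef.posSemidef_sqrt {n : Type*} [Fintype n] [DecidableEq n] {A : Matrix n n ℝ}
    (hA : A.PosSemidef) : hA.sqrt.PosSemidef := by
  unfold Matrix.PosSemidef.sqrt
  have hd : (diagonal ((↑) ∘ (√·) ∘ hA.1.eigenvalues) : Matrix n n ℝ).PosSemidef := by
    rw [posSemidef_diagonal_iff]; intro i; simp [Real.sqrt_nonneg]
  have := hd.mul_mul_conjTranspose_same (hA.1.eigenvectorUnitary : Matrix n n ℝ)
  simpa [Matrix.star_eq_conjTranspose] using this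

lemma Matrix.PosSemidef.sqrt_mul_self {n : Type*} [Fintype n] [DecidableEq n] {A : Matrix n n ℝ}
    (hA : A.PosSemidef) : hA.sqrt * hA.sqrt = A := by
  unfold Matrix.PosSemidef.sqrt
  set U := hA.1.eigenvectorUnitary
  have hU : (star U : Matrix n n ℝ) * (U : Matrix n n ℝ) = 1 := Unitary.coe_star_mul_self U
  conv_rhs => rw [hA.1.spectral_theorem, Unitary.conjStarAlgAut_apply]
  have hdd : diagonal ((↑) ∘ (√·) ∘ hA.1.eigenvalues) * diagonal ((↑) ∘ (√·) ∘ hA.1.eigenvalues)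
      = (diagonal (RCLike.ofReal ∘ hA.1.eigenvalues) : Matrix n n ℝ) := by
    rw [diagonal_mul_diagonal]; congr 1; ext i
    simp [Real.mul_self_sqrt (hA.eigenvalues_nonneg i)]
  calc _ = (U : Matrix n n ℝ) * (diagonal ((↑) ∘ (√·) ∘ hA.1.eigenvalues) *
        ((star U : Matrix n n ℝ) * (U : Matrix n n ℝ)) * diagonal ((↑) ∘ (√·) ∘ hA.1.eigenvalues))
          * (star U : Matrix n n ℝ) := by simp only [Matrix.mul_assoc]
    _ = _ := by rw [hU, Matrix.mul_one, hdd]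

lemma psd_diag_nonneg {V : Type*} [Fintype V] [DecidableEq V] {B : Matrix V V ℝ}
    (hB : B.PosSemidef) (v : V) : 0 ≤ B v v := by
  exact hB.diag_nonneg

lemma sqrt_diag_le {V : Type*} [Fintype V] [DecidableEq V] {S : Matrix V V ℝ}
    (hS : S.PosSemidef) (v : V) : hS.sqrt v v ≤ Real.sqrt (S v v) := by
  set B := hS.sqrt with hBdef
  have hB : B.PosSemidef := hS.posSemidef_sqrt
  have hmul : B * B = S := hS.sqrt_mul_self
  have hsym : ∀ i j, B j i = B i j := by
    intro i j
    have := hB.isHermitian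
    have h2 : Bᴴ = B := this
    calc B j i = Bᴴ i j := by simp [Matrix.conjTranspose_apply]
    _ = B i j := by rw [h2]
  have hdiag : S v v = ∑ w, (B v w) ^ 2 := by
    rw [← hmul]
    simp [Matrix.mul_apply, pow_two]
    congr 1; ext w; rw [hsym v w]
  have hle : (B v v) ^ 2 ≤ S v v := by
    rw [hdiag]
    exact Finset.single_le_sum (f := fun w => (B v w) ^ 2)
      (fun w _ => sq_nonneg _) (mem_univ v)
  have h0 : 0 ≤ B v v := psd_diag_nonneg hB v
  calc B v v = Real.sqrt ((B v v) ^ 2) := by rw [Real.sqrt_sq h0]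
  _ ≤ Real.sqrt (S v v) := Real.sqrt_le_sqrt hle

lemma adj_diag {n : ℕ} (E : Fin n → Fin n → Prop) [DecidableRel E] (v : Fin n) :
    (adjMat E * (adjMat E)ᵀ) v v = (outDeg E v : ℝ) := by
  simp only [Matrix.mul_apply, Matrix.transpose_apply, adjMat, Matrix.of_apply]
  rw [outDeg]
  rw [← Finset.sum_boole]
  congr 1; ext w
  by_cases h : E v w <;> simp [h]

/-- For any simple digraph, `E(G) ≤ 2 √(Δ(G)) R(G)`. -/
theorem stmt_4 {n : ℕ} (E : Fin n → Fin n → Prop) [DecidableRel E]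
    (hloop : ∀ v, ¬ E v v) :
    energy (adjMat E) ≤ 2 * Real.sqrt (maxDeg E) * randic E := by
  have step1 : energy (adjMat E) ≤ ∑ v, Real.sqrt (outDeg E v) := by
    rw [energy, Matrix.trace]
    apply Finset.sum_le_sum
    intro v _
    have := sqrt_diag_le (mulTranspose_posSemidef (adjMat E)) v
    rw [adj_diag E v] at this
    exact this
  have step2 : ∀ v, Real.sqrt (outDeg E v) ≤
      Real.sqrt (maxDeg E) *
        ∑ w, (if E v w then 1 / Real.sqrt (outDeg E v * inDeg E w) else 0) := by
    intro v
    by_cases hd : outDeg E v = 0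
    · have hno : ∀ w, ¬ E v w := by
        intro w hw
        have : w ∈ univ.filter (fun w => E v w) := by simp [hw]
        rw [outDeg] at hd
        simp [Finset.card_eq_zero.mp hd] at this
      simp [hd, hno]
    · have hd1 : (1 : ℝ) ≤ (outDeg E v : ℝ) := by
        exact_mod_cast Nat.one_le_iff_ne_zero.mpr hd
      have hdpos : (0:ℝ) < (outDeg E v : ℝ) := lt_of_lt_of_le one_pos hd1
      have hΔn : outDeg E v ≤ maxDeg E :=
        le_trans (le_max_left _ _) (Finset.le_sup (f := fun u => max (outDeg E u) (inDeg E u)) (mem_univ v))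
      have hΔ : (outDeg E v : ℝ) ≤ (maxDeg E : ℝ) := by exact_mod_cast hΔn
      have hΔpos : (0:ℝ) < (maxDeg E : ℝ) := lt_of_lt_of_le hdpos hΔ
      set d : ℝ := (outDeg E v : ℝ)
      set D : ℝ := (maxDeg E : ℝ)
      have hterm : ∀ w, E v w →
          1 / Real.sqrt (d * D) ≤ 1 / Real.sqrt ((outDeg E v : ℝ) * (inDeg E w : ℝ)) := by
        intro w hw
        have hin1 : (1:ℝ) ≤ (inDeg E w : ℝ) := by
          have : v ∈ univ.filter (fun u => E u w) := by simp [hw]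
          have := Finset.card_pos.mpr ⟨v, this⟩
          exact_mod_cast this
        have hinΔ : (inDeg E w : ℝ) ≤ D := by
          have hn : inDeg E w ≤ maxDeg E :=
            le_trans (le_max_right _ _) (Finset.le_sup (f := fun u => max (outDeg E u) (inDeg E u)) (mem_univ w))
          show (inDeg E w : ℝ) ≤ (maxDeg E : ℝ)
          exact_mod_cast hn
        apply one_div_le_one_div_of_le
        · exact Real.sqrt_pos.mpr (by positivity)
        · exact Real.sqrt_le_sqrt (by nlinarith)
      have hsum : d * (1 / Real.sqrt (d * D)) ≤
          ∑ w, (if E v w then 1 / Real.sqrt ((outDeg E v : ℝ) * (inDeg E w : ℝ)) else 0) := by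
        have h1 : d * (1 / Real.sqrt (d * D)) =
            ∑ w, (if E v w then 1 / Real.sqrt (d * D) else 0) := by
          rw [← Finset.sum_filter, Finset.sum_const, nsmul_eq_mul]
          rfl
        rw [h1]
        apply Finset.sum_le_sum
        intro w _
        by_cases hw : E v w
        · simpa [hw] using hterm w hw
        · simp [hw]
      have key : Real.sqrt d = Real.sqrt D * (d * (1 / Real.sqrt (d * D))) := by
        rw [Real.sqrt_mul hdpos.le]
        have h1 : Real.sqrt d ≠ 0 := ne_of_gt (Real.sqrt_pos.mpr hdpos)
        have h2 : Real.sqrt D ≠ 0 := ne_of_gt (Real.sqrt_pos.mpr hΔpos)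
        field_simp
        rw [Real.sq_sqrt hdpos.le]
      calc Real.sqrt d = Real.sqrt D * (d * (1 / Real.sqrt (d * D))) := key
      _ ≤ Real.sqrt D * ∑ w, (if E v w then 1 / Real.sqrt ((outDeg E v : ℝ) * (inDeg E w : ℝ)) else 0) :=
          mul_le_mul_of_nonneg_left hsum (Real.sqrt_nonneg _)
  calc energy (adjMat E) ≤ ∑ v, Real.sqrt (outDeg E v) := step1
  _ ≤ ∑ v, Real.sqrt (maxDeg E) *
        ∑ w, (if E v w then 1 / Real.sqrt (outDeg E v * inDeg E w) else 0) :=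
      Finset.sum_le_sum fun v _ => step2 v
  _ = 2 * Real.sqrt (maxDeg E) * randic E := by
      rw [randic, ← Finset.mul_sum]; ring
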